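/- arXiv:1409.2925 — 3 statements merged into one kernel-verified Lean document; each statement's English description precedes it below -/
import Mathlib

section
/- For a C² function u: ℝᴺ → ℝ with ∇u(x) ≠ 0, one has (1/2)(sup_{B_ε(x)} u + inf_{B_ε(x)} u) = u(x) + (ε²/2) Δ_∞ u(x) + o(ε²) as ε → 0, where Δ_∞ u(x) = ⟨∇²u(x) · (∇u(x)/|∇u(x)|), ∇u(x)/|∇u(x)|⟩. -/
/-!
Write `p = ∇u(x)`, `ν = p / ‖p‖` and `B = D²u(x)`. By Taylor's formula
`u(x + h) = u(x) + ⟪p, h⟫ + B h h / 2 + o(‖h‖²)`, so it suffices to expand the supremum of the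
quadratic model over `‖h‖ ≤ ε`; the infimum is minus the supremum for `-u`. The point `h = εν`
gives `ε‖p‖ + ε²/2 B ν ν`. Any other `h`, at distance `r` from `εν`, loses at least
`‖p‖ r² / (2ε)` in the linear term and gains at most `‖B‖ ε r` in the quadratic one, so by
AM-GM it exceeds that value by at most `‖B‖² ε³ / (2‖p‖) = o(ε²)`.
-/

open MeasureTheory Asymptotics Filter Topology

/-- The normalized infinity-Laplacian
`Δ_∞ u(x) = ⟨∇²u(x) (∇u/|∇u|), ∇u/|∇u|⟩` of `u` at `x`. -/
noncomputable def infLap {N : ℕ} (u : EuclideanSpace ℝ (Fin N) → ℝ)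
    (x : EuclideanSpace ℝ (Fin N)) : ℝ :=
  iteratedFDeriv ℝ 2 u x
    ![‖gradient u x‖⁻¹ • gradient u x, ‖gradient u x‖⁻¹ • gradient u x]

open Metric
open scoped RealInnerProductSpace

section Taylor

variable {E F : Type*} [NormedAddCommGroup E] [NormedSpace ℝ E]
  [NormedAddCommGroup F] [NormedSpace ℝ F]

theorem ContDiffAt.hasFDerivAt_sub_taylor_two {f : E → F} {x y : E}
    (hxy : ContDiffAt ℝ 2 f y) (hf : IsSymmSndFDerivAt ℝ f x) :
    HasFDerivAt
      (fun z => f z - f x - fderiv ℝ f x (z - x) - (2 : ℝ)⁻¹ • fderiv ℝ (fderiv ℝ f) x (z - x) (z - x))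
      (fderiv ℝ f y - fderiv ℝ f x - fderiv ℝ (fderiv ℝ f) x (y - x)) y := by
  have hsub := (hasFDerivAt_id (𝕜 := ℝ) y).sub_const x
  have := ((((hxy.differentiableAt two_ne_zero).hasFDerivAt.sub_const (f x)).sub
    ((fderiv ℝ f x).hasFDerivAt.comp y hsub)).sub
    (((fderiv ℝ (fderiv ℝ f) x).hasFDerivAt_of_bilinear hsub hsub).const_smul (2 : ℝ)⁻¹))
  refine this.congr_fderiv ?_
  ext v
  simp only [ContinuousLinearMap.comp_id, id_eq, ContinuousLinearMap.precompR_apply, map_sub,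
    sub_apply, ContinuousLinearMap.compL_apply, smul_add, add_apply, smul_apply,
    ContinuousLinearMap.precompL_apply, ContinuousLinearMap.id_apply, sub_right_inj]
  rw [hf v y, hf v x]
  module

theorem ContDiffAt.isLittleO_taylor_two {f : E → F} {x : E} (hf : ContDiffAt ℝ 2 f x) :
    (fun y => f y - f x - fderiv ℝ f x (y - x) - (2 : ℝ)⁻¹ • fderiv ℝ (fderiv ℝ f) x (y - x) (y - x))
      =o[𝓝 x] fun y => ‖y - x‖ ^ 2 := by
  obtain ⟨r, hr, hball⟩ := eventually_nhds_iff_ball.1 (hf.eventually (by decide))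
  have hsymm : IsSymmSndFDerivAt ℝ f x :=
    hf.isSymmSndFDerivAt (by simp [minSmoothness_of_isRCLikeNormedField])
  have hderiv : HasFDerivAt (fderiv ℝ f) (fderiv ℝ (fderiv ℝ f) x) x :=
    ((hf.fderiv_right (m := 1) le_rfl).differentiableAt one_ne_zero).hasFDerivAt
  have hnhds : 𝓝[ball x r] x = 𝓝 x := nhdsWithin_eq_nhds.2 (ball_mem_nhds x hr)
  -- The remainder vanishes at `x` and its derivative is `o(‖y - x‖)`; the mean value inequality
  -- integrates this to `o(‖y - x‖²)`.
  have := (convex_ball x r).isLittleO_pow_succ (n := 1) (mem_ball_self hr)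
    (fun y hy => ((hball y hy).hasFDerivAt_sub_taylor_two hsymm).hasFDerivWithinAt)
    (by simpa [hnhds, isLittleO_norm_right] using hderiv.isLittleO)
  simpa [hnhds] using this

end Taylor

theorem ContinuousLinearMap.norm_apply_self_sub_apply_self_le {E F : Type*}
    [NormedAddCommGroup E] [NormedSpace ℝ E] [NormedAddCommGroup F] [NormedSpace ℝ F]
    (B : E →L[ℝ] E →L[ℝ] F) (h v : E) :
    ‖B h h - B v v‖ ≤ ‖B‖ * (‖h‖ + ‖v‖) * ‖h - v‖ := by
  have hsplit : B h h - B v v = B (h - v) h + B v (h - v) := by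
    simp only [map_sub, sub_apply]
    abel
  calc ‖B h h - B v v‖ ≤ ‖B‖ * ‖h - v‖ * ‖h‖ + ‖B‖ * ‖v‖ * ‖h - v‖ := by
        rw [hsplit]
        exact (norm_add_le _ _).trans (add_le_add (B.le_opNorm₂ _ _) (B.le_opNorm₂ _ _))
    _ = ‖B‖ * (‖h‖ + ‖v‖) * ‖h - v‖ := by ring

theorem abs_sSup_image_sub_le {α : Type*} {f : α → ℝ} {s : Set α} {a η : ℝ}
    (hup : ∀ y ∈ s, f y ≤ a + η) (hlow : ∃ y ∈ s, a - η ≤ f y) : |sSup (f '' s) - a| ≤ η := by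
  obtain ⟨y₀, hy₀, hfy₀⟩ := hlow
  have hbdd : BddAbove (f '' s) := ⟨a + η, by rintro _ ⟨y, hy, rfl⟩; exact hup y hy⟩
  rw [abs_le]
  constructor
  · linarith [le_csSup hbdd (Set.mem_image_of_mem f hy₀)]
  · have := csSup_le (⟨_, Set.mem_image_of_mem f hy₀⟩ : (f '' s).Nonempty)
      (by rintro _ ⟨y, hy, rfl⟩; exact hup y hy)
    linarith

section InnerProductSpace

variable {E : Type*} [NormedAddCommGroup E] [InnerProductSpace ℝ E]

theorem two_mul_inner_add_norm_sub_sq_le {h v : E} (hh : ‖h‖ ≤ ‖v‖) :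
    2 * ⟪v, h⟫ + ‖h - v‖ ^ 2 ≤ 2 * ‖v‖ ^ 2 := by
  rw [norm_sub_sq_real, real_inner_comm]
  linarith [pow_le_pow_left₀ (norm_nonneg h) hh 2]

theorem inner_add_half_apply_self_le (B : E →L[ℝ] E →L[ℝ] ℝ) {p h : E} {ε : ℝ} (hp : p ≠ 0)
    (hε : 0 < ε) (hh : ‖h‖ ≤ ε) :
    ⟪p, h⟫ + B h h / 2 ≤ ε * ‖p‖ + ε ^ 2 / 2 * B (‖p‖⁻¹ • p) (‖p‖⁻¹ • p)
      + ‖B‖ ^ 2 * ε ^ 3 / (2 * ‖p‖) := by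
  have hp' : 0 < ‖p‖ := norm_pos_iff.2 hp
  set v := (ε / ‖p‖) • p
  have hv : ‖v‖ = ε := by
    rw [norm_smul, Real.norm_of_nonneg (by positivity), div_mul_cancel₀ _ hp'.ne']
  have hinner := two_mul_inner_add_norm_sub_sq_le (hh.trans hv.ge)
  have hdiff := (abs_le.1 (B.norm_apply_self_sub_apply_self_le h v)).2
  rw [hv] at hinner hdiff
  have hquad : B h h ≤ B v v + 2 * ‖B‖ * ε * ‖h - v‖ := by
    have : ‖B‖ * (‖h‖ + ε) * ‖h - v‖ ≤ ‖B‖ * (ε + ε) * ‖h - v‖ := by gcongr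
    linarith
  have hpv : ε * ‖p‖ * ⟪p, h⟫ = ‖p‖ ^ 2 * ⟪v, h⟫ := by
    rw [real_inner_smul_left]
    field_simp
  have hvv : ε * ‖p‖ * B v v = ε ^ 3 * ‖p‖ * B (‖p‖⁻¹ • p) (‖p‖⁻¹ • p) := by
    simp only [v, map_smul, smul_apply, smul_eq_mul]
    field_simp
  have hcubic : ε * ‖p‖ * (‖B‖ ^ 2 * ε ^ 3 / (2 * ‖p‖)) = ‖B‖ ^ 2 * ε ^ 4 / 2 := by
    field_simp
  refine le_of_mul_le_mul_left ?_ (mul_pos hε hp')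
  rw [mul_add _ _ (‖B‖ ^ 2 * ε ^ 3 / (2 * ‖p‖)), hcubic]
  linarith [sq_nonneg (‖p‖ * ‖h - v‖ - ‖B‖ * ε ^ 2),
    mul_le_mul_of_nonneg_left hquad (mul_pos hε hp').le,
    mul_le_mul_of_nonneg_left hinner (sq_nonneg ‖p‖)]

theorem sSup_image_closedBall_sub_isLittleO (B : E →L[ℝ] E →L[ℝ] ℝ) {g : E → ℝ} {x p : E}
    (hp : p ≠ 0)
    (hg : (fun y => g y - g x - ⟪p, y - x⟫ - B (y - x) (y - x) / 2) =o[𝓝 x] fun y => ‖y - x‖ ^ 2) :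
    (fun ε : ℝ => sSup (g '' closedBall x ε) - g x - ε * ‖p‖
        - ε ^ 2 / 2 * B (‖p‖⁻¹ • p) (‖p‖⁻¹ • p)) =o[𝓝[>] 0] fun ε => ε ^ 2 := by
  set ν := ‖p‖⁻¹ • p
  have hp' : 0 < ‖p‖ := norm_pos_iff.2 hp
  rw [isLittleO_iff]
  intro c hc
  obtain ⟨r, hr, hR⟩ := eventually_nhds_iff_ball.1 (isLittleO_iff.1 hg (half_pos hc))
  have hK : ∀ᶠ ε in 𝓝 (0 : ℝ), ‖B‖ ^ 2 * ε / (2 * ‖p‖) ≤ c / 2 := by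
    have : Tendsto (fun ε : ℝ => ‖B‖ ^ 2 * ε / (2 * ‖p‖)) (𝓝 0) (𝓝 0) := by
      simpa using ((tendsto_id (x := 𝓝 (0 : ℝ))).const_mul (‖B‖ ^ 2)).div_const (2 * ‖p‖)
    exact this.eventually (ge_mem_nhds (half_pos hc))
  filter_upwards [self_mem_nhdsWithin, nhdsWithin_le_nhds (eventually_lt_nhds hr),
    nhdsWithin_le_nhds hK] with ε (hε : 0 < ε) hεr hεK
  have hrem : ∀ y ∈ closedBall x ε,
      |g y - g x - ⟪p, y - x⟫ - B (y - x) (y - x) / 2| ≤ c / 2 * ε ^ 2 := by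
    intro y hy
    rw [mem_closedBall_iff_norm] at hy
    calc _ ≤ c / 2 * ‖‖y - x‖ ^ 2‖ := hR y (by rw [mem_ball_iff_norm]; linarith)
      _ ≤ c / 2 * ε ^ 2 := by rw [norm_pow, norm_norm]; gcongr
  have hcubic : ‖B‖ ^ 2 * ε ^ 3 / (2 * ‖p‖) ≤ c / 2 * ε ^ 2 := by
    calc _ = ‖B‖ ^ 2 * ε / (2 * ‖p‖) * ε ^ 2 := by ring
      _ ≤ c / 2 * ε ^ 2 := by gcongr
  have hup : ∀ y ∈ closedBall x ε, g y ≤ g x + ε * ‖p‖ + ε ^ 2 / 2 * B ν ν + c * ε ^ 2 := by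
    intro y hy
    have := inner_add_half_apply_self_le B hp hε (mem_closedBall_iff_norm.1 hy)
    linarith [(abs_le.1 (hrem y hy)).2]
  have hν : x + ε • ν ∈ closedBall x ε := by
    rw [mem_closedBall_iff_norm, add_sub_cancel_left, norm_smul, norm_smul, norm_inv,
      norm_norm, inv_mul_cancel₀ hp'.ne', Real.norm_of_nonneg hε.le, mul_one]
  have hlow : g x + ε * ‖p‖ + ε ^ 2 / 2 * B ν ν - c * ε ^ 2 ≤ g (x + ε • ν) := by
    have hinner : ⟪p, ε • ν⟫ = ε * ‖p‖ := by
      rw [real_inner_smul_right, real_inner_smul_right, real_inner_self_eq_norm_sq]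
      field_simp
    have hquad : B (ε • ν) (ε • ν) / 2 = ε ^ 2 / 2 * B ν ν := by
      simp only [map_smul, smul_apply, smul_eq_mul]
      ring
    have := (abs_le.1 (hrem _ hν)).1
    rw [add_sub_cancel_left, hinner, hquad] at this
    linarith [mul_pos hc (pow_pos hε 2)]
  have := abs_sSup_image_sub_le hup ⟨_, hν, hlow⟩
  rw [Real.norm_eq_abs, Real.norm_of_nonneg (sq_nonneg ε)]
  convert this using 2
  ring

theorem midrange_image_closedBall_sub_isLittleO (B : E →L[ℝ] E →L[ℝ] ℝ) {g : E → ℝ} {x p : E}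
    (hp : p ≠ 0)
    (hg : (fun y => g y - g x - ⟪p, y - x⟫ - B (y - x) (y - x) / 2) =o[𝓝 x] fun y => ‖y - x‖ ^ 2) :
    (fun ε : ℝ => (1 / 2) * (sSup (g '' closedBall x ε) + sInf (g '' closedBall x ε)) - g x
        - ε ^ 2 / 2 * B (‖p‖⁻¹ • p) (‖p‖⁻¹ • p)) =o[𝓝[>] 0] fun ε => ε ^ 2 := by
  have hsup := sSup_image_closedBall_sub_isLittleO B hp hg
  have hinf := sSup_image_closedBall_sub_isLittleO (-B) (neg_ne_zero.2 hp) (g := -g)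
    (hg.neg_left.congr_left fun y => by
      simp only [Pi.neg_apply, inner_neg_left, neg_apply]
      ring)
  refine ((hsup.sub hinf).const_mul_left (1 / 2)).congr' (.of_forall fun ε => ?_) .rfl
  have hneg : (-g) '' closedBall x ε = -(g '' closedBall x ε) := by
    rw [← Set.image_neg_eq_neg, Set.image_image]
    rfl
  dsimp only
  rw [hneg, Real.sSup_neg]
  simp only [norm_neg, smul_neg, map_neg, neg_apply, neg_neg, Pi.neg_apply]
  ring

end InnerProductSpace

theorem midrange_expansion_general {N : ℕ}
    (u : EuclideanSpace ℝ (Fin N) → ℝ) (x : EuclideanSpace ℝ (Fin N))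
    (hu : ContDiffAt ℝ 2 u x) (hgrad : gradient u x ≠ 0) :
    (fun ε : ℝ =>
        (1 / 2) * (sSup (u '' Metric.closedBall x ε) + sInf (u '' Metric.closedBall x ε))
          - u x - ε ^ 2 / 2 * infLap u x)
      =o[𝓝[>] (0 : ℝ)] fun ε => ε ^ 2 := by
  have hT := hu.isLittleO_taylor_two
  simp only [smul_eq_mul, inv_mul_eq_div, ← inner_gradient_left] at hT
  simpa [infLap, iteratedFDeriv_two_apply] using
    midrange_image_closedBall_sub_isLittleO (fderiv ℝ (fderiv ℝ u) x) hgrad hT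

/-- Expansion of the midrange of a C² function with nonvanishing gradient:
`(sup_{B_ε(x)} u + inf_{B_ε(x)} u)/2 = u(x) + ε²/2 Δ_∞u(x) + o(ε²)` as `ε → 0⁺`. -/
theorem midrange_expansion {N : ℕ} (hN : 1 ≤ N)
    (u : EuclideanSpace ℝ (Fin N) → ℝ) (x : EuclideanSpace ℝ (Fin N))
    (hu : ContDiffAt ℝ 2 u x) (hgrad : gradient u x ≠ 0) :
    (fun ε : ℝ =>
        (1 / 2) * (sSup (u '' Metric.closedBall x ε) + sInf (u '' Metric.closedBall x ε))
          - u x - ε ^ 2 / 2 * infLap u x)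
      =o[𝓝[>] (0 : ℝ)] fun ε => ε ^ 2 :=
  midrange_expansion_general u x hu hgrad
end

section
/- Suppose u_ε : ℝᴺ → ℝ is bounded and satisfies the p-harmonious mean value property u_ε(x) = (α/2)(sup_{B_ε(x)} u_ε + inf_{B_ε(x)} u_ε) + β ⨍_{B_ε(x)} u_ε for all x ∈ Ω, with α, β ≥ 0, α + β = 1. If Player II uses a strategy σ̄_II satisfying u_ε(σ̄_II(x_0,…,x_n)) ≤ inf_{B_ε(x_n)} u_ε + η/2^{n+1}, then for any strategy σ_I of Player I, the sequence M_n = u_ε(x_n) + η/2ⁿ is a supermartingale under P^{x_0}_{σ_I, σ̄_II}. -/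
open MeasureTheory

/-! Player I can raise `u` to at most `sup_{B_ε(x_n)} u`, Player II lowers it to within
`η/2^{n+1}` of `inf_{B_ε(x_n)} u`, and the noise averages it, so by the mean value property the
expected next value of `u` exceeds `u(x_n)` by at most `η/2^{n+1}`. This loss is absorbed by
the drop `η/2ⁿ - η/2^{n+1} = η/2^{n+1}` of the correction term. -/

theorem supermartingale_add_of_condExp_add_le {Ω : Type*} {m : MeasurableSpace Ω}
    {μ : Measure Ω} [IsFiniteMeasure μ] {ℱ : Filtration ℕ m} {f : ℕ → Ω → ℝ} (c : ℕ → ℝ)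
    (hadp : Adapted ℱ f) (hint : ∀ n, Integrable (f n) μ)
    (hstep : ∀ n, ∀ᵐ ω ∂μ, μ[f (n + 1) | ℱ n] ω + c (n + 1) ≤ f n ω + c n) :
    Supermartingale (fun n ω => f n ω + c n) ℱ μ := by
  refine supermartingale_nat (fun n => ((hadp.add (adapted_const' ℱ c)) n).stronglyMeasurable)
    (fun n => (hint n).add (integrable_const _)) fun n => ?_
  have hcond : μ[fun ω => f (n + 1) ω + c (n + 1) | ℱ n]
      =ᵐ[μ] fun ω => μ[f (n + 1) | ℱ n] ω + c (n + 1) := by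
    refine (condExp_add (hint (n + 1)) (integrable_const (c (n + 1))) _).trans ?_
    rw [condExp_const (ℱ.le n)]
    rfl
  filter_upwards [hcond, hstep n] with ω hω hω'
  rwa [hω]

theorem tugOfWar_step_le {E : Type*} {u : E → ℝ} {S : Set E}
    {y z : E} {α δ b : ℝ} (hS : BddAbove (u '' S)) (hy : y ∈ S)
    (hz : u z ≤ sInf (u '' S) + δ) (hα : 0 ≤ α) (hα2 : α ≤ 2) (hδ : 0 ≤ δ) :
    α / 2 * u y + α / 2 * u z + b + δ ≤ α / 2 * (sSup (u '' S) + sInf (u '' S)) + b + 2 * δ := by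
  have hy' : u y ≤ sSup (u '' S) := le_csSup hS (Set.mem_image_of_mem u hy)
  have hα0 : 0 ≤ α / 2 := by linarith
  nlinarith [mul_le_mul_of_nonneg_left hy' hα0, mul_le_mul_of_nonneg_left hz hα0]

theorem tug_of_war_supermartingale_general {N : ℕ}
    {Θ : Type*} {m : MeasurableSpace Θ} (μ : Measure Θ) [IsProbabilityMeasure μ]
    (ℱ : Filtration ℕ m)
    (ε η α β : ℝ) (hη : 0 < η)
    (hα : 0 ≤ α) (hβ : 0 ≤ β) (hαβ : α + β = 1)
    (u : EuclideanSpace ℝ (Fin N) → ℝ) (hub : ∃ C : ℝ, ∀ x, |u x| ≤ C)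
    (X : ℕ → Θ → EuclideanSpace ℝ (Fin N))
    (σI σII : (n : ℕ) → (Fin (n + 1) → EuclideanSpace ℝ (Fin N)) → EuclideanSpace ℝ (Fin N))
    -- the p-harmonious mean value property of `u`
    (hMVP : ∀ x, u x = α / 2 * (sSup (u '' Metric.ball x ε) + sInf (u '' Metric.ball x ε))
        + β * ⨍ y in Metric.ball x ε, u y)
    -- both players move the token within distance `ε`
    (hσI : ∀ n (h : Fin (n + 1) → EuclideanSpace ℝ (Fin N)),
      σI n h ∈ Metric.ball (h (Fin.last n)) ε)
    -- Player II's strategy is almost optimal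
    (hopt : ∀ n (h : Fin (n + 1) → EuclideanSpace ℝ (Fin N)),
      u (σII n h) ≤ sInf (u '' Metric.ball (h (Fin.last n)) ε) + η / 2 ^ (n + 1))
    -- the process `u(X_n)` is adapted and integrable
    (hadp : Adapted ℱ fun n ω => u (X n ω))
    (hint : ∀ n, Integrable (fun ω => u (X n ω)) μ)
    -- the game dynamics: one-step conditional expectation given the history
    (hgame : ∀ n, μ[(fun ω => u (X (n + 1) ω)) | ℱ n]
        =ᵐ[μ] fun ω => α / 2 * u (σI n fun i => X i ω) + α / 2 * u (σII n fun i => X i ω)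
          + β * ⨍ y in Metric.ball (X n ω) ε, u y) :
    Supermartingale (fun n ω => u (X n ω) + η / 2 ^ n) ℱ μ := by
  obtain ⟨C, hC⟩ := hub
  have hbdd (x) : BddAbove (u '' Metric.ball x ε) :=
    ⟨C, by rintro _ ⟨y, -, rfl⟩; exact (abs_le.mp (hC y)).2⟩
  refine supermartingale_add_of_condExp_add_le (fun n => η / 2 ^ n) hadp hint fun n => ?_
  filter_upwards [hgame n] with ω hω
  have hhalf : η / 2 ^ n = 2 * (η / 2 ^ (n + 1)) := by
    rw [pow_succ]
    field_simp
  rw [hω, hMVP (X n ω), hhalf]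
  exact tugOfWar_step_le (hbdd (X n ω)) (hσI n fun i => X i ω)
    (hopt n fun i => X i ω) hα (by linarith) (by positivity)

/-- The supermartingale property in the Tug-of-War game with noise.
`u` is bounded and p-harmonious: `u(x) = (α/2)(sup_{B_ε(x)} u + inf_{B_ε(x)} u) + β ⨍_{B_ε(x)} u`.
The token process `X` under `P^{x₀}_{σ_I, σ̄_II}` moves, conditionally on the history
`(x₀,…,x_n)`, to Player I's choice `σ_I(x₀,…,x_n)` with probability `α/2`, to Player II's
choice `σ̄_II(x₀,…,x_n)` with probability `α/2`, and uniformly in `B_ε(x_n)` with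
probability `β`; both players move within `B_ε(x_n)` and Player II plays almost optimally:
`u(σ̄_II(x₀,…,x_n)) ≤ inf_{B_ε(x_n)} u + η/2^{n+1}`.
Then `M_n = u(X_n) + η/2ⁿ` is a supermartingale. -/
theorem tug_of_war_supermartingale {N : ℕ} (hN : 1 ≤ N)
    {Θ : Type*} {m : MeasurableSpace Θ} (μ : Measure Θ) [IsProbabilityMeasure μ]
    (ℱ : Filtration ℕ m)
    (ε η α β : ℝ) (hε : 0 < ε) (hη : 0 < η)
    (hα : 0 ≤ α) (hβ : 0 ≤ β) (hαβ : α + β = 1)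
    (u : EuclideanSpace ℝ (Fin N) → ℝ) (hub : ∃ C : ℝ, ∀ x, |u x| ≤ C)
    (X : ℕ → Θ → EuclideanSpace ℝ (Fin N))
    (σI σII : (n : ℕ) → (Fin (n + 1) → EuclideanSpace ℝ (Fin N)) → EuclideanSpace ℝ (Fin N))
    -- the p-harmonious mean value property of `u`
    (hMVP : ∀ x, u x = α / 2 * (sSup (u '' Metric.ball x ε) + sInf (u '' Metric.ball x ε))
        + β * ⨍ y in Metric.ball x ε, u y)
    -- both players move the token within distance `ε`
    (hσI : ∀ n (h : Fin (n + 1) → EuclideanSpace ℝ (Fin N)),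
      σI n h ∈ Metric.ball (h (Fin.last n)) ε)
    (hσII : ∀ n (h : Fin (n + 1) → EuclideanSpace ℝ (Fin N)),
      σII n h ∈ Metric.ball (h (Fin.last n)) ε)
    -- Player II's strategy is almost optimal
    (hopt : ∀ n (h : Fin (n + 1) → EuclideanSpace ℝ (Fin N)),
      u (σII n h) ≤ sInf (u '' Metric.ball (h (Fin.last n)) ε) + η / 2 ^ (n + 1))
    -- the process `u(X_n)` is adapted and integrable
    (hadp : Adapted ℱ fun n ω => u (X n ω))
    (hint : ∀ n, Integrable (fun ω => u (X n ω)) μ)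
    -- the game dynamics: one-step conditional expectation given the history
    (hgame : ∀ n, μ[(fun ω => u (X (n + 1) ω)) | ℱ n]
        =ᵐ[μ] fun ω => α / 2 * u (σI n fun i => X i ω) + α / 2 * u (σII n fun i => X i ω)
          + β * ⨍ y in Metric.ball (X n ω) ε, u y) :
    Supermartingale (fun n ω => u (X n ω) + η / 2 ^ n) ℱ μ :=
  tug_of_war_supermartingale_general μ ℱ ε η α β hη hα hβ hαβ u hub X σI σII hMVP hσI hopt hadp hint
    hgame
end

section
/- If u_ε and v_ε are two bounded functions both satisfying the p-harmonious mean value property in Ω with β > 0, and u_ε ≤ v_ε on ℝᴺ ∖ Ω, then u_ε ≤ v_ε in Ω (comparison principle for p-harmonious functions). -/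
open MeasureTheory Metric Filter Topology Set
open scoped ENNReal

/-!
Put `w = u - v`, `M = sup w` and `h x = ⨍_{B_ε(x)} w`, which is continuous. If `M > 0`, then
`{w > 0} ⊆ Ω`, and subtracting the two mean value properties gives `w ≤ α M + β h` there. Taking
sups, the maximum of `h` over the compact set `closure Ω` is `M`, attained at some `x₀`. Then
`w = M` a.e. on `B_ε(x₀)`; those points lie in `Ω`, so `h = M` there too, and by continuity on all
of `B_ε(x₀)`. Hence `{h = M}` is clopen, so `h ≡ M > 0`, which fails on a ball outside `Ω`.
-/

section BallIntegral

variable {E F : Type*} [NormedAddCommGroup E] [NormedSpace ℝ E] [MeasurableSpace E] [BorelSpace E]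
  [FiniteDimensional ℝ E] [Nontrivial E] [NormedAddCommGroup F] [NormedSpace ℝ F]
  (μ : Measure E) [μ.IsAddHaarMeasure] {f : E → F}

/-- Spheres are null, so for a.e. `y` the indicator of `ball x r` at `y` is locally constant
in `x`; dominated convergence does the rest. -/
theorem continuous_setIntegral_ball (hf : LocallyIntegrable f μ) (r : ℝ) :
    Continuous fun x => ∫ y in ball x r, f y ∂μ := by
  refine continuous_iff_continuousAt.2 fun x => ?_
  simp_rw [← integral_indicator measurableSet_ball]
  refine continuousAt_of_dominated (bound := (closedBall x (r + 1)).indicator fun y => ‖f y‖)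
    (Eventually.of_forall fun x' => hf.aestronglyMeasurable.indicator measurableSet_ball) ?_
    (IntegrableOn.integrable_indicator
      (hf.integrableOn_isCompact (isCompact_closedBall x (r + 1))).norm measurableSet_closedBall) ?_
  · filter_upwards [ball_mem_nhds x one_pos] with x' hx'
    refine Eventually.of_forall fun y => ?_
    by_cases hy : y ∈ ball x' r
    · have : y ∈ closedBall x (r + 1) := by
        rw [mem_ball] at hy hx'
        rw [mem_closedBall]
        linarith [dist_triangle y x' x]
      simp [indicator_of_mem hy, indicator_of_mem this]
    · simp only [indicator_of_notMem hy, norm_zero]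
      exact indicator_nonneg (fun _ _ => norm_nonneg _) y
  · filter_upwards [measure_eq_zero_iff_ae_notMem.1 (μ.addHaar_sphere x r)] with y hy
    have hdist : ContinuousAt (fun x' => dist y x') x :=
      (continuous_const.dist continuous_id).continuousAt
    refine (continuousAt_const (y := (ball x r).indicator f y)).congr ?_
    rcases lt_or_gt_of_ne (mem_sphere.not.1 hy) with hlt | hgt
    · filter_upwards [hdist.eventually_lt continuousAt_const hlt] with x' hx'
      rw [indicator_of_mem (mem_ball.2 hlt), indicator_of_mem (mem_ball.2 hx')]
    · filter_upwards [continuousAt_const.eventually_lt hdist hgt] with x' hx'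
      rw [indicator_of_notMem (mem_ball.not.2 hgt.not_gt),
        indicator_of_notMem (mem_ball.not.2 hx'.not_gt)]

theorem continuous_setAverage_ball (hf : LocallyIntegrable f μ) (r : ℝ) :
    Continuous fun x => ⨍ y in ball x r, f y ∂μ := by
  simp_rw [setAverage_eq, measureReal_def, μ.addHaar_ball_center]
  exact continuous_const.smul (continuous_setIntegral_ball μ hf r)

end BallIntegral

theorem Bornology.IsBounded.exists_disjoint_ball {E : Type*} [NormedAddCommGroup E]
    [NormedSpace ℝ E] [Nontrivial E] {s : Set E} (hs : Bornology.IsBounded s) (r : ℝ) :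
    ∃ z, Disjoint (ball z r) s := by
  obtain ⟨z, hz⟩ := Filter.nonempty_of_mem (Bornology.isBounded_def.1 (hs.thickening (δ := r)))
  refine ⟨z, disjoint_left.2 fun y hy hys => hz ?_⟩
  exact mem_thickening_iff.2 ⟨y, hys, by rw [dist_comm]; exact hy⟩

theorem csSup_image_le_csSup_image_add {ι : Type*} {f g : ι → ℝ} {s : Set ι} {c : ℝ}
    (hs : s.Nonempty) (hg : BddAbove (g '' s)) (hfg : ∀ x ∈ s, f x ≤ g x + c) :
    sSup (f '' s) ≤ sSup (g '' s) + c :=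
  csSup_le (hs.image f) <| forall_mem_image.2 fun x hx =>
    (hfg x hx).trans (add_le_add_left (le_csSup hg (mem_image_of_mem g hx)) c)

theorem csInf_image_le_csInf_image_add {ι : Type*} {f g : ι → ℝ} {s : Set ι} {c : ℝ}
    (hs : s.Nonempty) (hf : BddBelow (f '' s)) (hfg : ∀ x ∈ s, f x ≤ g x + c) :
    sInf (f '' s) ≤ sInf (g '' s) + c :=
  sub_le_iff_le_add.1 <| le_csInf (hs.image g) <| forall_mem_image.2 fun x hx =>
    sub_le_iff_le_add.2 ((csInf_le hf (mem_image_of_mem f hx)).trans (hfg x hx))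

theorem locallyIntegrable_of_abs_le {X : Type*} [TopologicalSpace X] [MeasurableSpace X]
    {μ : Measure X} [IsLocallyFiniteMeasure μ] {f : X → ℝ} (hf : AEStronglyMeasurable f μ) {C : ℝ}
    (hC : ∀ x, |f x| ≤ C) : LocallyIntegrable f μ :=
  (locallyIntegrable_const C).mono hf
    (ae_of_all _ fun x => by simpa using (hC x).trans (le_abs_self C))

theorem MeasureTheory.LocallyIntegrable.integrableOn_ball {X E : Type*} [PseudoMetricSpace X]
    [ProperSpace X] [MeasurableSpace X] [NormedAddCommGroup E] {μ : Measure X} {f : X → E}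
    (hf : LocallyIntegrable f μ) (x : X) (r : ℝ) : IntegrableOn f (ball x r) μ :=
  (hf.integrableOn_isCompact (isCompact_closedBall x r)).mono_set ball_subset_closedBall

section Average

variable {X : Type*} [MeasurableSpace X] {μ : Measure X} {s : Set X} {f : X → ℝ} {c : ℝ}

theorem setAverage_le_of_ae_le (hs₀ : μ s ≠ 0) (hs : μ s ≠ ∞) (hf : IntegrableOn f s μ)
    (hfc : ∀ᵐ x ∂μ.restrict s, f x ≤ c) : ⨍ x in s, f x ∂μ ≤ c := by
  have hμs : 0 < μ.real s := ENNReal.toReal_pos hs₀ hs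
  rw [← mul_le_mul_iff_of_pos_left hμs, ← smul_eq_mul, measure_smul_setAverage f hs]
  calc ∫ x in s, f x ∂μ ≤ ∫ _ in s, c ∂μ := integral_mono_ae hf (integrableOn_const hs) hfc
    _ = μ.real s * c := by rw [setIntegral_const, smul_eq_mul]

theorem ae_eq_of_setAverage_eq_of_ae_le (hs : μ s ≠ ∞) (hf : IntegrableOn f s μ)
    (hfc : ∀ᵐ x ∂μ.restrict s, f x ≤ c) (havg : ⨍ x in s, f x ∂μ = c) :
    ∀ᵐ x ∂μ.restrict s, f x = c := by
  have hzero : ∫ x in s, (c - f x) ∂μ = 0 := by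
    rw [integral_sub (integrableOn_const (C := c) hs) hf, setIntegral_const,
      ← measure_smul_setAverage f hs, havg, sub_self]
  have := (integral_eq_zero_iff_of_nonneg_ae (hfc.mono fun x hx => sub_nonneg.2 hx)
    ((integrableOn_const hs).sub hf)).1 hzero
  filter_upwards [this] with x hx
  exact (sub_eq_zero.1 hx).symm

theorem setAverage_sub {g : X → ℝ} (hf : IntegrableOn f s μ) (hg : IntegrableOn g s μ) :
    ⨍ x in s, (f x - g x) ∂μ = ⨍ x in s, f x ∂μ - ⨍ x in s, g x ∂μ := by
  simp only [setAverage_eq, integral_sub hf hg, smul_sub]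

end Average

section MeanValue

variable {X : Type*} [PseudoMetricSpace X] [MeasurableSpace X]

noncomputable def pHarmoniousMean (μ : Measure X) (α β ε : ℝ) (u : X → ℝ) (x : X) : ℝ :=
  α / 2 * (sSup (u '' ball x ε) + sInf (u '' ball x ε)) + β * ⨍ y in ball x ε, u y ∂μ

theorem pHarmoniousMean_sub_le {μ : Measure X} {α β ε M : ℝ} {u v : X → ℝ} {x : X}
    (hε : 0 < ε) (hα : 0 ≤ α) (hu : BddBelow (u '' ball x ε)) (hv : BddAbove (v '' ball x ε))
    (hui : IntegrableOn u (ball x ε) μ) (hvi : IntegrableOn v (ball x ε) μ)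
    (huv : ∀ y ∈ ball x ε, u y ≤ v y + M) :
    pHarmoniousMean μ α β ε u x - pHarmoniousMean μ α β ε v x
      ≤ α * M + β * ⨍ y in ball x ε, (u y - v y) ∂μ := by
  have hsup := csSup_image_le_csSup_image_add ⟨x, mem_ball_self hε⟩ hv huv
  have hinf := csInf_image_le_csInf_image_add ⟨x, mem_ball_self hε⟩ hu huv
  have hsum := mul_le_mul_of_nonneg_left (add_le_add hsup hinf) (by positivity : 0 ≤ α / 2)
  rw [pHarmoniousMean, pHarmoniousMean, setAverage_sub hui hvi]
  linarith

end MeanValue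

section StrongMaximumPrinciple

variable {X : Type*} {w h : X → ℝ} {α β M : ℝ}

theorem exists_le_of_isLUB_of_le_add [TopologicalSpace X] {K : Set X} (hK : IsCompact K)
    (hh : ContinuousOn h K) (hβ : 0 < β) (hαβ : α + β = 1) (hM : IsLUB (range w) M)
    (hM₀ : 0 < M) (hwK : ∀ x, 0 < w x → x ∈ K) (hwh : ∀ x, 0 < w x → w x ≤ α * M + β * h x) :
    ∃ x₀, M ≤ h x₀ := by
  obtain ⟨x₁, hx₁⟩ : ∃ x, 0 < w x := by
    by_contra! hw
    exact hM₀.not_ge (hM.2 (forall_mem_range.2 hw))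
  obtain ⟨x₀, -, hx₀⟩ := hK.exists_isMaxOn ⟨x₁, hwK x₁ hx₁⟩ hh
  have hw_le : ∀ x, w x ≤ max 0 (α * M + β * h x₀) := fun x => by
    rcases le_or_gt (w x) 0 with hx | hx
    · exact hx.trans (le_max_left _ _)
    · have : h x ≤ h x₀ := hx₀ (hwK x hx)
      exact (hwh x hx).trans (le_max_of_le_right (by gcongr))
  have hMle : M ≤ max 0 (α * M + β * h x₀) := hM.2 (forall_mem_range.2 hw_le)
  exact ⟨x₀, by nlinarith [(le_max_iff.1 hMle).resolve_left hM₀.not_ge]⟩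

variable [PseudoMetricSpace X] [ProperSpace X] [MeasurableSpace X]
  {μ : Measure X} [IsFiniteMeasureOnCompacts μ] [μ.IsOpenPosMeasure] {ε : ℝ}

theorem setAverage_ball_eq_on_ball (hε : 0 < ε) (hβ : 0 < β) (hαβ : α + β = 1) (hM₀ : 0 < M)
    (hw : LocallyIntegrable w μ) (hwM : ∀ x, w x ≤ M)
    (hh : Continuous fun x => ⨍ y in ball x ε, w y ∂μ)
    (hwh : ∀ x, 0 < w x → w x ≤ α * M + β * ⨍ y in ball x ε, w y ∂μ)
    {x : X} (hx : M ≤ ⨍ y in ball x ε, w y ∂μ) :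
    ∀ y ∈ ball x ε, ⨍ z in ball y ε, w z ∂μ = M := by
  have hball : ∀ y : X, μ (ball y ε) ≠ ∞ := fun y => measure_ball_lt_top.ne
  have hhM : ∀ y, ⨍ z in ball y ε, w z ∂μ ≤ M := fun y =>
    setAverage_le_of_ae_le (measure_ball_pos μ y hε).ne' (hball y) (hw.integrableOn_ball y ε)
      (ae_of_all _ hwM)
  have hw_ae : ∀ᵐ y ∂μ.restrict (ball x ε), w y = M :=
    ae_eq_of_setAverage_eq_of_ae_le (hball x) (hw.integrableOn_ball x ε) (ae_of_all _ hwM)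
      (le_antisymm (hhM x) hx)
  refine Measure.eqOn_open_of_ae_eq (μ := μ) ?_ isOpen_ball hh.continuousOn continuousOn_const
  filter_upwards [hw_ae] with y hy
  have := hwh y (hy ▸ hM₀)
  exact le_antisymm (hhM y) (by nlinarith)

theorem forall_setAverage_ball_eq [PreconnectedSpace X] (hε : 0 < ε) (hβ : 0 < β)
    (hαβ : α + β = 1) (hM₀ : 0 < M) (hw : LocallyIntegrable w μ) (hwM : ∀ x, w x ≤ M)
    (hh : Continuous fun x => ⨍ y in ball x ε, w y ∂μ)
    (hwh : ∀ x, 0 < w x → w x ≤ α * M + β * ⨍ y in ball x ε, w y ∂μ)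
    {x₀ : X} (hx₀ : M ≤ ⨍ y in ball x₀ ε, w y ∂μ) :
    ∀ x, ⨍ y in ball x ε, w y ∂μ = M := by
  have hopen : IsOpen {x | ⨍ y in ball x ε, w y ∂μ = M} := isOpen_iff.2 fun x hx =>
    ⟨ε, hε, setAverage_ball_eq_on_ball hε hβ hαβ hM₀ hw hwM hh hwh hx.ge⟩
  have huniv := IsClopen.eq_univ ⟨isClosed_eq hh continuous_const, hopen⟩
    ⟨x₀, setAverage_ball_eq_on_ball hε hβ hαβ hM₀ hw hwM hh hwh hx₀ x₀ (mem_ball_self hε)⟩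
  exact fun x => (huniv.symm ▸ mem_univ x : x ∈ {x | ⨍ y in ball x ε, w y ∂μ = M})

end StrongMaximumPrinciple

theorem p_harmonious_comparison_general {N : ℕ} (hN : 1 ≤ N)
    (Ω : Set (EuclideanSpace ℝ (Fin N))) (hΩb : Bornology.IsBounded Ω)
    (ε α β : ℝ) (hε : 0 < ε) (hα : 0 ≤ α) (hβ : 0 < β) (hαβ : α + β = 1)
    (u v : EuclideanSpace ℝ (Fin N) → ℝ)
    (humeas : Measurable u) (hvmeas : Measurable v)
    (hub : ∃ C : ℝ, ∀ x, |u x| ≤ C) (hvb : ∃ C : ℝ, ∀ x, |v x| ≤ C)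
    (humvp : ∀ x ∈ Ω, u x = α / 2 * (sSup (u '' ball x ε) + sInf (u '' ball x ε))
        + β * ⨍ y in ball x ε, u y)
    (hvmvp : ∀ x ∈ Ω, v x = α / 2 * (sSup (v '' ball x ε) + sInf (v '' ball x ε))
        + β * ⨍ y in ball x ε, v y)
    (hbdry : ∀ x ∉ Ω, u x ≤ v x) :
    ∀ x ∈ Ω, u x ≤ v x := by
  have : Nonempty (Fin N) := ⟨⟨0, hN⟩⟩
  obtain ⟨Cu, hCu⟩ := hub
  obtain ⟨Cv, hCv⟩ := hvb
  have hu := locallyIntegrable_of_abs_le (μ := volume) humeas.aestronglyMeasurable hCu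
  have hv := locallyIntegrable_of_abs_le (μ := volume) hvmeas.aestronglyMeasurable hCv
  set w := fun x => u x - v x
  have hw : LocallyIntegrable w volume := hu.sub hv
  have hM : IsLUB (range w) (sSup (range w)) := isLUB_csSup (range_nonempty w)
    ⟨Cu + Cv, forall_mem_range.2 fun x =>
      (le_abs_self _).trans ((abs_sub _ _).trans (add_le_add (hCu x) (hCv x)))⟩
  set M := sSup (range w)
  by_contra! ⟨x₁, -, hx₁⟩
  have hM₀ : 0 < M := (sub_pos.2 hx₁).trans_le (hM.1 ⟨x₁, rfl⟩)
  have hwΩ : ∀ x, 0 < w x → x ∈ Ω := fun x hx =>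
    by_contra fun hxΩ => (sub_nonpos.2 (hbdry x hxΩ)).not_gt hx
  have hwh : ∀ x, 0 < w x → w x ≤ α * M + β * ⨍ y in ball x ε, w y := fun x hx => by
    have := pHarmoniousMean_sub_le (μ := volume) (β := β) hε hα
      ⟨-Cu, forall_mem_image.2 fun y _ => neg_le_of_abs_le (hCu y)⟩
      ⟨Cv, forall_mem_image.2 fun y _ => le_of_abs_le (hCv y)⟩
      (hu.integrableOn_ball x ε) (hv.integrableOn_ball x ε)
      (fun y _ => sub_le_iff_le_add'.1 (hM.1 ⟨y, rfl⟩))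
    rwa [pHarmoniousMean, pHarmoniousMean, ← humvp x (hwΩ x hx), ← hvmvp x (hwΩ x hx)] at this
  have hh := continuous_setAverage_ball volume hw ε
  obtain ⟨x₀, hx₀⟩ := exists_le_of_isLUB_of_le_add hΩb.isCompact_closure hh.continuousOn hβ hαβ
    hM hM₀ (fun x hx => subset_closure (hwΩ x hx)) hwh
  have hh_eq := forall_setAverage_ball_eq hε hβ hαβ hM₀ hw (fun x => hM.1 ⟨x, rfl⟩) hh hwh hx₀
  obtain ⟨z, hz⟩ := hΩb.exists_disjoint_ball ε
  have hz_nonpos : ⨍ y in ball z ε, w y ≤ 0 :=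
    setAverage_le_of_ae_le (measure_ball_pos volume z hε).ne' measure_ball_lt_top.ne
      (hw.integrableOn_ball z ε) ((ae_restrict_mem measurableSet_ball).mono fun y hy =>
        sub_nonpos.2 (hbdry y (disjoint_left.1 hz hy)))
  linarith [hh_eq z]

/-- Comparison principle for p-harmonious functions: if bounded measurable `u` and `v`
both satisfy the p-harmonious mean value property in a bounded open `Ω` (with `β > 0`)
and `u ≤ v` outside `Ω`, then `u ≤ v` in `Ω`. -/
theorem p_harmonious_comparison {N : ℕ} (hN : 1 ≤ N)
    (Ω : Set (EuclideanSpace ℝ (Fin N))) (hΩo : IsOpen Ω) (hΩb : Bornology.IsBounded Ω)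
    (ε α β : ℝ) (hε : 0 < ε) (hα : 0 ≤ α) (hβ : 0 < β) (hαβ : α + β = 1)
    (u v : EuclideanSpace ℝ (Fin N) → ℝ)
    (humeas : Measurable u) (hvmeas : Measurable v)
    (hub : ∃ C : ℝ, ∀ x, |u x| ≤ C) (hvb : ∃ C : ℝ, ∀ x, |v x| ≤ C)
    (humvp : ∀ x ∈ Ω, u x = α / 2 * (sSup (u '' ball x ε) + sInf (u '' ball x ε))
        + β * ⨍ y in ball x ε, u y)
    (hvmvp : ∀ x ∈ Ω, v x = α / 2 * (sSup (v '' ball x ε) + sInf (v '' ball x ε))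
        + β * ⨍ y in ball x ε, v y)
    (hbdry : ∀ x ∉ Ω, u x ≤ v x) :
    ∀ x ∈ Ω, u x ≤ v x :=
  p_harmonious_comparison_general hN Ω hΩb ε α β hε hα hβ hαβ u v humeas hvmeas hub hvb humvp hvmvp
    hbdry
end
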